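/- arXiv:2505.17806 — 12 statements merged into one kernel-verified Lean document; each statement's English description precedes it below -/
import Mathlib

section
/- Let X be a set equipped with two topologies τ⁺ and τ⁻. Then the bitopological space (X, τ⁺, τ⁻) is T0, compact and zero-dimensional if and only if it is compact and totally order-separated. -/
open Set Topology

/-- The specialization preorder of a topology: `x ≤ y` iff every open set
containing `x` also contains `y`. -/
def SpecLE {X : Type*} (τ : TopologicalSpace X) (x y : X) : Prop :=
  ∀ U : Set X, IsOpen[τ] U → x ∈ U → y ∈ U

/-- A bitopological space is T0 if for any two distinct points there is a set,
open in one of the two topologies, containing exactly one of them. -/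
def BiT0 {X : Type*} (τp τm : TopologicalSpace X) : Prop :=
  ∀ x y : X, x ≠ y → ∃ U : Set X, (IsOpen[τp] U ∨ IsOpen[τm] U) ∧
    ((x ∈ U ∧ y ∉ U) ∨ (y ∈ U ∧ x ∉ U))

/-- A bitopological space is compact if every cover of `X` by sets, each open in
one of the two topologies, has a finite subcover. -/
def BiCompact {X : Type*} (τp τm : TopologicalSpace X) : Prop :=
  ∀ 𝒰 : Set (Set X), (∀ U ∈ 𝒰, IsOpen[τp] U ∨ IsOpen[τm] U) → ⋃₀ 𝒰 = univ →
    ∃ ℱ ⊆ 𝒰, ℱ.Finite ∧ ⋃₀ ℱ = univ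

/-- A bitopological space is zero-dimensional if every `τp`-open set is a union of
`τp`-open `τm`-closed sets, and symmetrically. -/
def BiZeroDim {X : Type*} (τp τm : TopologicalSpace X) : Prop :=
  (∀ U : Set X, IsOpen[τp] U → ∃ 𝒮 : Set (Set X),
      (∀ V ∈ 𝒮, IsOpen[τp] V ∧ IsClosed[τm] V) ∧ ⋃₀ 𝒮 = U) ∧
  (∀ U : Set X, IsOpen[τm] U → ∃ 𝒮 : Set (Set X),
      (∀ V ∈ 𝒮, IsOpen[τm] V ∧ IsClosed[τp] V) ∧ ⋃₀ 𝒮 = U)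

/-- `x ≤ y` iff `x ≤⁺ y` and `y ≤⁻ x`. -/
def BiLE {X : Type*} (τp τm : TopologicalSpace X) (x y : X) : Prop :=
  SpecLE τp x y ∧ SpecLE τm y x

/-- A bitopological space is totally order-separated if `BiLE` is a partial order and
whenever `¬ x ≤ y` there is a `τp`-open `τm`-closed set containing `x` but not `y`. -/
def TotOrdSep {X : Type*} (τp τm : TopologicalSpace X) : Prop :=
  ((∀ x : X, BiLE τp τm x x) ∧
   (∀ x y z : X, BiLE τp τm x y → BiLE τp τm y z → BiLE τp τm x z) ∧
   (∀ x y : X, BiLE τp τm x y → BiLE τp τm y x → x = y)) ∧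
  (∀ x y : X, ¬ BiLE τp τm x y →
    ∃ U : Set X, IsOpen[τp] U ∧ IsClosed[τm] U ∧ x ∈ U ∧ y ∉ U)

/-! In a compact bitopological space, the τ⁺-open τ⁻-closed sets separate x from y whenever
x ≰⁺ y exactly when they form a base of τ⁺: given x in a τ⁺-open U, compactness lets finitely
many of the sets separating x from the points outside U cover the complement of U, and their
intersection is a τ⁺-open τ⁻-closed neighbourhood of x inside U. Applying this to both
topologies identifies zero-dimensionality with the separation clause of total
order-separation, and T0 is antisymmetry of ≤. -/

section
variable {X : Type*}

def HasOpenClosedBase (τ σ : TopologicalSpace X) : Prop :=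
  ∀ U : Set X, IsOpen[τ] U → ∃ 𝒮 : Set (Set X),
    (∀ V ∈ 𝒮, IsOpen[τ] V ∧ IsClosed[σ] V) ∧ ⋃₀ 𝒮 = U

def OpenClosedSeparated (τ σ : TopologicalSpace X) : Prop :=
  ∀ x y : X, ¬ SpecLE τ x y → ∃ V : Set X, IsOpen[τ] V ∧ IsClosed[σ] V ∧ x ∈ V ∧ y ∉ V

variable {τp τm τ σ : TopologicalSpace X}

theorem BiCompact.symm (hc : BiCompact τp τm) : BiCompact τm τp :=
  fun 𝒰 h𝒰 hcov => hc 𝒰 (fun U hU => (h𝒰 U hU).symm) hcov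

theorem HasOpenClosedBase.openClosedSeparated (h : HasOpenClosedBase τ σ) :
    OpenClosedSeparated τ σ := by
  intro x y hxy
  obtain ⟨U, hU, hxU, hyU⟩ : ∃ U, IsOpen[τ] U ∧ x ∈ U ∧ y ∉ U := by
    simpa [SpecLE] using hxy
  obtain ⟨𝒮, h𝒮, rfl⟩ := h U hU
  obtain ⟨V, hV𝒮, hxV⟩ := hxU
  exact ⟨V, (h𝒮 V hV𝒮).1, (h𝒮 V hV𝒮).2, hxV, fun hyV => hyU ⟨V, hV𝒮, hyV⟩⟩

theorem BiCompact.exists_isOpen_isClosed_mem_subset (hc : BiCompact τ σ) {U : Set X}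
    (hU : IsOpen[τ] U) {x : X} (hx : x ∈ U)
    (hsep : ∀ y ∉ U, ∃ V : Set X, IsOpen[τ] V ∧ IsClosed[σ] V ∧ x ∈ V ∧ y ∉ V) :
    ∃ W : Set X, IsOpen[τ] W ∧ IsClosed[σ] W ∧ x ∈ W ∧ W ⊆ U := by
  set 𝒢 : Set (Set X) := {V | IsOpen[τ] V ∧ IsClosed[σ] V ∧ x ∈ V}
  obtain ⟨ℱ, hℱ𝒰, hℱ, hℱcov⟩ := hc (insert U (compl '' 𝒢))
    (by
      rintro A (rfl | ⟨V, hV, rfl⟩)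
      exacts [Or.inl hU, Or.inr hV.2.1.isOpen_compl])
    (by
      refine eq_univ_of_forall fun y => ?_
      by_cases hy : y ∈ U
      · exact ⟨U, mem_insert U _, hy⟩
      · obtain ⟨V, hVo, hVc, hxV, hyV⟩ := hsep y hy
        exact ⟨Vᶜ, mem_insert_of_mem U ⟨V, ⟨hVo, hVc, hxV⟩, rfl⟩, hyV⟩)
  have h𝒢ℱ : (𝒢 ∩ compl ⁻¹' ℱ).Finite := (hℱ.preimage compl_injective.injOn).inter_of_right _
  refine ⟨⋂₀ (𝒢 ∩ compl ⁻¹' ℱ), @Set.Finite.isOpen_sInter X τ _ h𝒢ℱ fun V hV => hV.1.1,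
    isClosed_sInter fun V hV => hV.1.2.1, mem_sInter.2 fun V hV => hV.1.2.2, fun z hz => ?_⟩
  obtain ⟨A, hAℱ, hzA⟩ := hℱcov.symm ▸ mem_univ z
  rcases hℱ𝒰 hAℱ with rfl | ⟨V, hV, rfl⟩
  · exact hzA
  · exact absurd (mem_sInter.1 hz V ⟨hV, hAℱ⟩) hzA

theorem BiCompact.hasOpenClosedBase (hc : BiCompact τ σ) (h : OpenClosedSeparated τ σ) :
    HasOpenClosedBase τ σ := by
  refine fun U hU => ⟨{V | (IsOpen[τ] V ∧ IsClosed[σ] V) ∧ V ⊆ U}, fun V hV => hV.1,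
    (sUnion_subset fun V hV => hV.2).antisymm fun x hx => ?_⟩
  obtain ⟨W, hWo, hWc, hxW, hWU⟩ := hc.exists_isOpen_isClosed_mem_subset hU hx
    fun y hy => h x y fun hxy => hy (hxy U hU hx)
  exact ⟨W, ⟨⟨hWo, hWc⟩, hWU⟩, hxW⟩

theorem BiCompact.biZeroDim_iff (hc : BiCompact τp τm) :
    BiZeroDim τp τm ↔ OpenClosedSeparated τp τm ∧ OpenClosedSeparated τm τp :=
  ⟨fun h => ⟨HasOpenClosedBase.openClosedSeparated h.1,
      HasOpenClosedBase.openClosedSeparated h.2⟩,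
    fun ⟨hp, hm⟩ => ⟨hc.hasOpenClosedBase hp, hc.symm.hasOpenClosedBase hm⟩⟩

theorem biLE_refl (x : X) : BiLE τp τm x x :=
  ⟨fun _ _ h => h, fun _ _ h => h⟩

theorem biLE_trans {x y z : X} (hxy : BiLE τp τm x y) (hyz : BiLE τp τm y z) :
    BiLE τp τm x z :=
  ⟨fun U hU hx => hyz.1 U hU (hxy.1 U hU hx), fun U hU hz => hxy.2 U hU (hyz.2 U hU hz)⟩

theorem not_biLE_iff {x y : X} :
    ¬ BiLE τp τm x y ↔
      ∃ U : Set X, (IsOpen[τp] U ∧ x ∈ U ∧ y ∉ U) ∨ (IsOpen[τm] U ∧ y ∈ U ∧ x ∉ U) := by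
  simp only [BiLE, SpecLE, not_and_or, not_forall, exists_prop, ← exists_or]

theorem biT0_iff_antisymm :
    BiT0 τp τm ↔ ∀ x y : X, BiLE τp τm x y → BiLE τp τm y x → x = y := by
  constructor
  · intro ht0 x y hxy hyx
    by_contra hne
    obtain ⟨U, hU | hU, ⟨hx, hy⟩ | ⟨hy, hx⟩⟩ := ht0 x y hne
    exacts [hy (hxy.1 U hU hx), hx (hyx.1 U hU hy), hy (hyx.2 U hU hx), hx (hxy.2 U hU hy)]
  · intro hanti x y hne
    have hlt : ¬ BiLE τp τm x y ∨ ¬ BiLE τp τm y x := by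
      by_contra! h
      exact hne (hanti x y h.1 h.2)
    rcases hlt with h | h <;> obtain ⟨U, ⟨hU, hmem⟩ | ⟨hU, hmem⟩⟩ := not_biLE_iff.1 h
    exacts [⟨U, Or.inl hU, Or.inl hmem⟩, ⟨U, Or.inr hU, Or.inr hmem⟩,
      ⟨U, Or.inl hU, Or.inr hmem⟩, ⟨U, Or.inr hU, Or.inl hmem⟩]

theorem forall_not_biLE_iff :
    (∀ x y : X, ¬ BiLE τp τm x y →
      ∃ U : Set X, IsOpen[τp] U ∧ IsClosed[τm] U ∧ x ∈ U ∧ y ∉ U) ↔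
      OpenClosedSeparated τp τm ∧ OpenClosedSeparated τm τp := by
  constructor
  · intro h
    refine ⟨fun x y hxy => h x y fun hle => hxy hle.1, fun x y hxy => ?_⟩
    obtain ⟨U, hUo, hUc, hyU, hxU⟩ := h y x fun hle => hxy hle.2
    exact ⟨Uᶜ, hUc.isOpen_compl, @IsOpen.isClosed_compl _ τp _ hUo, hxU, fun hyU' => hyU' hyU⟩
  · rintro ⟨hp, hm⟩ x y hxy
    rcases not_and_or.1 hxy with h | h
    · exact hp x y h
    · obtain ⟨V, hVo, hVc, hyV, hxV⟩ := hm y x h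
      exact ⟨Vᶜ, hVc.isOpen_compl, @IsOpen.isClosed_compl _ τm _ hVo, hxV, fun hyV' => hyV' hyV⟩

end

/-- A bitopological space is T0, compact and zero-dimensional iff it is compact and
totally order-separated. -/
theorem bitop_t0_compact_zeroDim_iff_compact_totOrdSep
    {X : Type*} (τp τm : TopologicalSpace X) :
    (BiT0 τp τm ∧ BiCompact τp τm ∧ BiZeroDim τp τm) ↔
      (BiCompact τp τm ∧ TotOrdSep τp τm) := by
  rw [TotOrdSep, forall_not_biLE_iff, biT0_iff_antisymm]
  constructor
  · rintro ⟨hanti, hc, hzd⟩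
    exact ⟨hc, ⟨biLE_refl, fun _ _ _ => biLE_trans, hanti⟩, hc.biZeroDim_iff.1 hzd⟩
  · rintro ⟨hc, ⟨-, -, hanti⟩, hsep⟩
    exact ⟨hanti, hc, hc.biZeroDim_iff.2 hsep⟩
end

section
/- Let X be a set equipped with two topologies τ⁺ and τ⁻. If the bitopological space (X, τ⁺, τ⁻) is zero-dimensional, then for all x, y ∈ X one has x ≤⁺ y if and only if y ≤⁻ x; that is, the specialization preorder of τ⁺ is the opposite of the specialization preorder of τ⁻. -/
open Set Topology

/-- In a zero-dimensional bitopological space, the specialization preorder of `τp`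
is the opposite of the specialization preorder of `τm`. -/
theorem zeroDim_specLE_iff {X : Type*} (τp τm : TopologicalSpace X)
    (hzd : BiZeroDim τp τm) :
    ∀ x y : X, SpecLE τp x y ↔ SpecLE τm y x := by
  intro x y
  constructor
  · intro h U hU hyU
    obtain ⟨𝒮, hS, hUn⟩ := hzd.2 U hU
    rw [← hUn] at hyU ⊢
    obtain ⟨V, hV𝒮, hyV⟩ := hyU
    by_contra hx
    have hxV : x ∉ V := fun hxV => hx ⟨V, hV𝒮, hxV⟩
    exact (h Vᶜ (hS V hV𝒮).2.isOpen_compl hxV) hyV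
  · intro h U hU hxU
    obtain ⟨𝒮, hS, hUn⟩ := hzd.1 U hU
    rw [← hUn] at hxU ⊢
    obtain ⟨V, hV𝒮, hxV⟩ := hxU
    by_contra hy
    have hyV : y ∉ V := fun hyV => hy ⟨V, hV𝒮, hyV⟩
    exact (h Vᶜ (hS V hV𝒮).2.isOpen_compl hyV) hxV
end

section
/- Let X be a set equipped with two topologies τ⁺ and τ⁻. If the bitopological space (X, τ⁺, τ⁻) is T0 and zero-dimensional, then it is totally order-separated: the relation ≤ (where x ≤ y means x ≤⁺ y and y ≤⁻ x) is a partial order, and whenever x ≰ y there is a τ⁺-open and τ⁻-closed set containing x but not y. -/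
open Set Topology

/-- A T0 and zero-dimensional bitopological space is totally order-separated. -/
theorem t0_zeroDim_totOrdSep {X : Type*} (τp τm : TopologicalSpace X)
    (ht0 : BiT0 τp τm) (hzd : BiZeroDim τp τm) :
    TotOrdSep τp τm := by
  constructor
  · refine ⟨fun x => ⟨fun U _ hx => hx, fun U _ hx => hx⟩,
      fun x y z hxy hyz => ⟨fun U hU hx => hyz.1 U hU (hxy.1 U hU hx),
        fun U hU hz => hxy.2 U hU (hyz.2 U hU hz)⟩, ?_⟩
    intro x y hxy hyx
    by_contra hne
    obtain ⟨U, hUo, hsep⟩ := ht0 x y hne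
    rcases hUo with hU | hU <;> rcases hsep with ⟨hx, hy⟩ | ⟨hy, hx⟩
    · exact hy (hxy.1 U hU hx)
    · exact hx (hyx.1 U hU hy)
    · exact hy (hyx.2 U hU hx)
    · exact hx (hxy.2 U hU hy)
  · intro x y hxy
    rw [BiLE, not_and_or] at hxy
    rcases hxy with h | h
    · simp only [SpecLE, not_forall] at h
      obtain ⟨U, hU, hx, hy⟩ := h
      obtain ⟨𝒮, h𝒮, hUn⟩ := hzd.1 U hU
      rw [← hUn] at hx hy
      obtain ⟨V, hV, hxV⟩ := hx
      exact ⟨V, (h𝒮 V hV).1, (h𝒮 V hV).2, hxV, fun hyV => hy ⟨V, hV, hyV⟩⟩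
    · simp only [SpecLE, not_forall] at h
      obtain ⟨U, hU, hy, hx⟩ := h
      obtain ⟨𝒮, h𝒮, hUn⟩ := hzd.2 U hU
      rw [← hUn] at hx hy
      obtain ⟨V, hV, hyV⟩ := hy
      refine ⟨Vᶜ, ?_, ?_, fun hxV => hx ⟨V, hV, hxV⟩, fun h => h hyV⟩
      · exact (h𝒮 V hV).2.isOpen_compl
      · rw [isClosed_compl_iff]; exact (h𝒮 V hV).1
end

section
/- Let X be a set equipped with two topologies τ⁺ and τ⁻. If the bitopological space (X, τ⁺, τ⁻) is T0 and zero-dimensional, then each of the topological spaces (X, τ⁺) and (X, τ⁻) is a T0 topological space. -/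
open Set Topology

/-- If a bitopological space is T0 and zero-dimensional, then both of its
constituent topological spaces are T0. -/
theorem t0_zeroDim_bi_t0 {X : Type*} (τp τm : TopologicalSpace X)
    (ht0 : BiT0 τp τm) (hzd : BiZeroDim τp τm) :
    @T0Space X τp ∧ @T0Space X τm := by
  -- key: for any x ≠ y there is a set open in one topology, closed in the other,
  -- containing exactly one of the points
  have key : ∀ x y : X, x ≠ y → ∃ V : Set X,
      ((IsOpen[τp] V ∧ IsClosed[τm] V) ∨ (IsOpen[τm] V ∧ IsClosed[τp] V)) ∧
      ((x ∈ V ∧ y ∉ V) ∨ (y ∈ V ∧ x ∉ V)) := by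
    intro x y hxy
    obtain ⟨U, hUopen, hsep⟩ := ht0 x y hxy
    -- WLOG symmetry: handle both membership cases uniformly
    have main : ∀ a b : X, a ∈ U → b ∉ U → ∃ V : Set X,
        ((IsOpen[τp] V ∧ IsClosed[τm] V) ∨ (IsOpen[τm] V ∧ IsClosed[τp] V)) ∧
        a ∈ V ∧ b ∉ V := by
      intro a b ha hb
      rcases hUopen with hU | hU
      · obtain ⟨𝒮, h𝒮, hUnion⟩ := hzd.1 U hU
        rw [← hUnion] at ha hb
        obtain ⟨V, hV𝒮, haV⟩ := ha
        refine ⟨V, Or.inl (h𝒮 V hV𝒮), haV, fun hbV => hb ⟨V, hV𝒮, hbV⟩⟩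
      · obtain ⟨𝒮, h𝒮, hUnion⟩ := hzd.2 U hU
        rw [← hUnion] at ha hb
        obtain ⟨V, hV𝒮, haV⟩ := ha
        refine ⟨V, Or.inr (h𝒮 V hV𝒮), haV, fun hbV => hb ⟨V, hV𝒮, hbV⟩⟩
    rcases hsep with ⟨hx, hy⟩ | ⟨hy, hx⟩
    · obtain ⟨V, hV, hmem⟩ := main x y hx hy
      exact ⟨V, hV, Or.inl hmem⟩
    · obtain ⟨V, hV, hmem⟩ := main y x hy hx
      exact ⟨V, hV, Or.inr hmem⟩
  constructor
  · rw [@t0Space_iff_exists_isOpen_xor'_mem X τp]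
    intro x y hxy
    obtain ⟨V, hV, hmem⟩ := key x y hxy
    rcases hV with ⟨hVo, _⟩ | ⟨_, hVc⟩
    · refine ⟨V, hVo, ?_⟩
      rcases hmem with ⟨h1, h2⟩ | ⟨h1, h2⟩
      · exact Or.inl ⟨h1, h2⟩
      · exact Or.inr ⟨h1, h2⟩
    · refine ⟨Vᶜ, hVc.isOpen_compl, ?_⟩
      rcases hmem with ⟨h1, h2⟩ | ⟨h1, h2⟩
      · exact Or.inr ⟨h2, fun h => h h1⟩
      · exact Or.inl ⟨h2, fun h => h h1⟩
  · rw [@t0Space_iff_exists_isOpen_xor'_mem X τm]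
    intro x y hxy
    obtain ⟨V, hV, hmem⟩ := key x y hxy
    rcases hV with ⟨_, hVc⟩ | ⟨hVo, _⟩
    · refine ⟨Vᶜ, hVc.isOpen_compl, ?_⟩
      rcases hmem with ⟨h1, h2⟩ | ⟨h1, h2⟩
      · exact Or.inr ⟨h2, fun h => h h1⟩
      · exact Or.inl ⟨h2, fun h => h h1⟩
    · refine ⟨V, hVo, ?_⟩
      rcases hmem with ⟨h1, h2⟩ | ⟨h1, h2⟩
      · exact Or.inl ⟨h1, h2⟩
      · exact Or.inr ⟨h1, h2⟩
end

section
/- Let A and B be bounded distributive lattices and con, tot ⊆ A × B. Assume con is closed under logic meets and logic joins, tot is closed under logic meets and logic joins, and the (con–tot) axiom holds. Then for any (a₁, b₁), (a₂, b₂) ∈ con ∩ tot, a₁ ≤ a₂ implies b₂ ≤ b₁. Consequently, con ∩ tot is an antichain with respect to the componentwise order on A × B: if (a₁, b₁), (a₂, b₂) ∈ con ∩ tot with a₁ ≤ a₂ and b₁ ≤ b₂, then (a₁, b₁) = (a₂, b₂). -/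
/-- If `con` and `tot` are closed under logic meets and logic joins and the
(con–tot) axiom holds, then for pairs in `con ∩ tot`, `a₁ ≤ a₂` implies
`b₂ ≤ b₁`; consequently `con ∩ tot` is an antichain in the componentwise
order. -/
theorem con_inter_tot_antichain
    {A B : Type*} [DistribLattice A] [BoundedOrder A]
    [DistribLattice B] [BoundedOrder B]
    (con tot : Set (A × B))
    (hconMeet : ∀ p ∈ con, ∀ q ∈ con, (p.1 ⊓ q.1, p.2 ⊔ q.2) ∈ con)
    (hconJoin : ∀ p ∈ con, ∀ q ∈ con, (p.1 ⊔ q.1, p.2 ⊓ q.2) ∈ con)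
    (htotMeet : ∀ p ∈ tot, ∀ q ∈ tot, (p.1 ⊓ q.1, p.2 ⊔ q.2) ∈ tot)
    (htotJoin : ∀ p ∈ tot, ∀ q ∈ tot, (p.1 ⊔ q.1, p.2 ⊓ q.2) ∈ tot)
    (hct : ∀ p ∈ con, ∀ q ∈ tot, (p.1 = q.1 ∨ p.2 = q.2) → p.1 ≤ q.1 ∧ p.2 ≤ q.2) :
    (∀ p ∈ con ∩ tot, ∀ q ∈ con ∩ tot, p.1 ≤ q.1 → q.2 ≤ p.2) ∧
    (∀ p ∈ con ∩ tot, ∀ q ∈ con ∩ tot, p.1 ≤ q.1 → p.2 ≤ q.2 → p = q) := by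
  have main : ∀ p ∈ con ∩ tot, ∀ q ∈ con ∩ tot, p.1 ≤ q.1 → q.2 ≤ p.2 := by
    intro p hp q hq h
    have hr : (p.1 ⊓ q.1, p.2 ⊔ q.2) ∈ con := hconMeet p hp.1 q hq.1
    have := hct _ hr p hp.2 (Or.inl (by simp [inf_eq_left.mpr h]))
    have h2 : p.2 ⊔ q.2 ≤ p.2 := this.2
    exact le_trans le_sup_right h2
  refine ⟨main, ?_⟩
  intro p hp q hq h1 h2
  have hb : p.2 = q.2 := le_antisymm h2 (main p hp q hq h1)
  have ha1 := (hct p hp.1 q hq.2 (Or.inr hb)).1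
  have ha2 := (hct q hq.1 p hp.2 (Or.inr hb.symm)).1
  exact Prod.ext (le_antisymm ha1 ha2) hb
end

section
/- Let A and B be bounded distributive lattices and con, tot ⊆ A × B. Assume con is closed under logic meets and logic joins, tot is closed under logic meets and logic joins, tot is an upper set of A × B, and the (con–tot) axiom holds. Let I be an ideal of A and J an ideal of B such that I × J ⊆ con, and suppose (a, b) ∈ (I × J) ∩ tot. Then I = {x ∈ A : x ≤ a} and J = {y ∈ B : y ≤ b}; in particular, I and J are principal ideals generated by a and b respectively. -/
/-- An ideal of a lattice: a nonempty, downward-closed subset closed under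
binary joins. -/
def IsLatIdeal {L : Type*} [Lattice L] (I : Set L) : Prop :=
  I.Nonempty ∧ (∀ x y : L, x ≤ y → y ∈ I → x ∈ I) ∧ (∀ x ∈ I, ∀ y ∈ I, x ⊔ y ∈ I)

/-- If `con` and `tot` are closed under logic meets and joins, `tot` is an upper
set, and the (con–tot) axiom holds, then any pair of ideals `I, J` with
`I × J ⊆ con` that meets `tot` at `(a, b)` consists of the principal ideals
generated by `a` and `b`. -/
theorem ideal_pair_in_con_meeting_tot_is_principal
    {A B : Type*} [DistribLattice A] [BoundedOrder A]
    [DistribLattice B] [BoundedOrder B]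
    (con tot : Set (A × B))
    (hconMeet : ∀ p ∈ con, ∀ q ∈ con, (p.1 ⊓ q.1, p.2 ⊔ q.2) ∈ con)
    (hconJoin : ∀ p ∈ con, ∀ q ∈ con, (p.1 ⊔ q.1, p.2 ⊓ q.2) ∈ con)
    (htotMeet : ∀ p ∈ tot, ∀ q ∈ tot, (p.1 ⊓ q.1, p.2 ⊔ q.2) ∈ tot)
    (htotJoin : ∀ p ∈ tot, ∀ q ∈ tot, (p.1 ⊔ q.1, p.2 ⊓ q.2) ∈ tot)
    (htotUpper : ∀ p ∈ tot, ∀ q : A × B, p ≤ q → q ∈ tot)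
    (hct : ∀ p ∈ con, ∀ q ∈ tot, (p.1 = q.1 ∨ p.2 = q.2) → p.1 ≤ q.1 ∧ p.2 ≤ q.2)
    (I : Set A) (J : Set B) (hI : IsLatIdeal I) (hJ : IsLatIdeal J)
    (hIJ : ∀ x ∈ I, ∀ y ∈ J, (x, y) ∈ con)
    (a : A) (b : B) (ha : a ∈ I) (hb : b ∈ J) (hab : (a, b) ∈ tot) :
    I = {x : A | x ≤ a} ∧ J = {y : B | y ≤ b} := by
  constructor
  · ext x
    constructor
    · intro hx
      exact (hct (x, b) (hIJ x hx b hb) (a, b) hab (Or.inr rfl)).1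
    · intro hx
      exact hI.2.1 x a hx ha
  · ext y
    constructor
    · intro hy
      exact (hct (a, y) (hIJ a ha y hy) (a, b) hab (Or.inl rfl)).2
    · intro hy
      exact hJ.2.1 y b hy hb
end

section
/- Let A and B be complete lattices, let tot ⊆ A × B be an upper set of the componentwise order that is inaccessible by directed suprema (for every nonempty directed subset D of A × B, if the supremum of D lies in tot then some element of D lies in tot), and let con ⊆ A × B satisfy the (con–tot) axiom. If (a, b) ∈ con ∩ tot, then a is a compact element of A and b is a compact element of B (an element x of a complete lattice is compact if whenever x ≤ sup D for a nonempty directed set D, there is d ∈ D with x ≤ d). -/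
/-- If `tot` is an upper set inaccessible by directed suprema and `con`
satisfies the (con–tot) axiom, then both components of any element of
`con ∩ tot` are compact elements. -/
theorem components_compact_of_mem_con_inter_tot
    {A B : Type*} [CompleteLattice A] [CompleteLattice B]
    (con tot : Set (A × B))
    (htotUpper : ∀ p ∈ tot, ∀ q : A × B, p ≤ q → q ∈ tot)
    (htotScott : ∀ D : Set (A × B), D.Nonempty → DirectedOn (· ≤ ·) D →
      sSup D ∈ tot → ∃ p ∈ D, p ∈ tot)
    (hct : ∀ p ∈ con, ∀ q ∈ tot, (p.1 = q.1 ∨ p.2 = q.2) → p.1 ≤ q.1 ∧ p.2 ≤ q.2)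
    (a : A) (b : B) (hab : (a, b) ∈ con ∩ tot) :
    (∀ D : Set A, D.Nonempty → DirectedOn (· ≤ ·) D → a ≤ sSup D → ∃ x ∈ D, a ≤ x) ∧
    (∀ D : Set B, D.Nonempty → DirectedOn (· ≤ ·) D → b ≤ sSup D → ∃ y ∈ D, b ≤ y) := by
  obtain ⟨hcon, htot⟩ := hab
  constructor
  · intro D hne hdir hle
    set D' : Set (A × B) := (fun x => (x, b)) '' D with hD'
    have hne' : D'.Nonempty := hne.image _
    have hdir' : DirectedOn (· ≤ ·) D' := by
      rintro _ ⟨x, hx, rfl⟩ _ ⟨y, hy, rfl⟩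
      obtain ⟨z, hz, hxz, hyz⟩ := hdir x hx y hy
      exact ⟨(z, b), ⟨z, hz, rfl⟩, ⟨hxz, le_rfl⟩, ⟨hyz, le_rfl⟩⟩
    have hsup : sSup D' = (sSup D, b) := by
      have h1 : (sSup D').1 = sSup D := by
        rw [Prod.fst_sSup]
        congr 1
        ext x; constructor
        · rintro ⟨_, ⟨y, hy, rfl⟩, rfl⟩; exact hy
        · intro hx; exact ⟨(x, b), ⟨x, hx, rfl⟩, rfl⟩
      have h2 : (sSup D').2 = b := by
        rw [Prod.snd_sSup]
        have : Prod.snd '' D' = {b} := by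
          ext y; constructor
          · rintro ⟨_, ⟨x, hx, rfl⟩, rfl⟩; rfl
          · intro hy; rw [Set.mem_singleton_iff] at hy; subst hy
            obtain ⟨x, hx⟩ := hne; exact ⟨(x, y), ⟨x, hx, rfl⟩, rfl⟩
        rw [this, sSup_singleton]
      exact Prod.ext h1 h2
    have hmem : sSup D' ∈ tot := by
      rw [hsup]
      exact htotUpper (a, b) htot _ ⟨hle, le_rfl⟩
    obtain ⟨p, hpD, hptot⟩ := htotScott D' hne' hdir' hmem
    obtain ⟨x, hx, rfl⟩ := hpD
    exact ⟨x, hx, (hct (a, b) hcon (x, b) hptot (Or.inr rfl)).1⟩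
  · intro D hne hdir hle
    set D' : Set (A × B) := (fun y => (a, y)) '' D with hD'
    have hne' : D'.Nonempty := hne.image _
    have hdir' : DirectedOn (· ≤ ·) D' := by
      rintro _ ⟨x, hx, rfl⟩ _ ⟨y, hy, rfl⟩
      obtain ⟨z, hz, hxz, hyz⟩ := hdir x hx y hy
      exact ⟨(a, z), ⟨z, hz, rfl⟩, ⟨le_rfl, hxz⟩, ⟨le_rfl, hyz⟩⟩
    have hsup : sSup D' = (a, sSup D) := by
      have h1 : (sSup D').1 = a := by
        rw [Prod.fst_sSup]
        have : Prod.fst '' D' = {a} := by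
          ext y; constructor
          · rintro ⟨_, ⟨x, hx, rfl⟩, rfl⟩; rfl
          · intro hy; rw [Set.mem_singleton_iff] at hy; subst hy
            obtain ⟨x, hx⟩ := hne; exact ⟨(y, x), ⟨x, hx, rfl⟩, rfl⟩
        rw [this, sSup_singleton]
      have h2 : (sSup D').2 = sSup D := by
        rw [Prod.snd_sSup]
        congr 1
        ext x; constructor
        · rintro ⟨_, ⟨y, hy, rfl⟩, rfl⟩; exact hy
        · intro hx; exact ⟨(a, x), ⟨x, hx, rfl⟩, rfl⟩
      exact Prod.ext h1 h2
    have hmem : sSup D' ∈ tot := by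
      rw [hsup]
      exact htotUpper (a, b) htot _ ⟨le_rfl, hle⟩
    obtain ⟨p, hpD, hptot⟩ := htotScott D' hne' hdir' hmem
    obtain ⟨y, hy, rfl⟩ := hpD
    exact ⟨y, hy, (hct (a, b) hcon (a, y) hptot (Or.inl rfl)).2⟩
end

section
/- Let A and B be bounded distributive lattices and con, tot ⊆ A × B arbitrary subsets. Suppose G⁺ is an ideal of A and G⁻ an ideal of B such that for every (a, b) ∈ con, a ∈ G⁺ or b ∈ G⁻; suppose F⁺ is a filter of A and F⁻ a filter of B such that for every (a, b) ∈ tot, a ∈ F⁺ or b ∈ F⁻; and suppose F⁺ ∩ G⁺ = ∅ and F⁻ ∩ G⁻ = ∅. Then there exist a prime ideal I⁺ of A and a prime ideal I⁻ of B such that G⁺ ⊆ I⁺, I⁺ ∩ F⁺ = ∅, G⁻ ⊆ I⁻, I⁻ ∩ F⁻ = ∅, for every (a, b) ∈ con, a ∈ I⁺ or b ∈ I⁻, and for every (a, b) ∈ tot, a ∉ I⁺ or b ∉ I⁻. -/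
/-- A filter of a lattice: a nonempty, upward-closed subset closed under
binary meets. -/
def IsLatFilter {L : Type*} [Lattice L] (F : Set L) : Prop :=
  F.Nonempty ∧ (∀ x y : L, x ≤ y → x ∈ F → y ∈ F) ∧ (∀ x ∈ F, ∀ y ∈ F, x ⊓ y ∈ F)

/-- A prime ideal of a lattice: a proper ideal `I` such that `x ⊓ y ∈ I` implies
`x ∈ I` or `y ∈ I`. -/
def IsPrimeLatIdeal {L : Type*} [Lattice L] (I : Set L) : Prop :=
  IsLatIdeal I ∧ I ≠ Set.univ ∧ ∀ x y : L, x ⊓ y ∈ I → x ∈ I ∨ y ∈ I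


private lemma inter_empty_absurd {α : Type*} {s t : Set α} (h : s ∩ t = ∅)
    {a : α} (ha : a ∈ s) (hb : a ∈ t) : False := by
  have : a ∈ s ∩ t := ⟨ha, hb⟩
  rw [h] at this
  exact this

/-- Any d-filter pair disjoint from a d-ideal pair can be separated by a prime
d-ideal pair. -/
theorem exists_prime_d_ideal_between
    {A B : Type*} [DistribLattice A] [BoundedOrder A]
    [DistribLattice B] [BoundedOrder B]
    (con tot : Set (A × B))
    (Gp : Set A) (Gm : Set B) (Fp : Set A) (Fm : Set B)
    (hGp : IsLatIdeal Gp) (hGm : IsLatIdeal Gm)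
    (hFp : IsLatFilter Fp) (hFm : IsLatFilter Fm)
    (hcon : ∀ p ∈ con, p.1 ∈ Gp ∨ p.2 ∈ Gm)
    (htot : ∀ p ∈ tot, p.1 ∈ Fp ∨ p.2 ∈ Fm)
    (hdisj1 : Fp ∩ Gp = ∅) (hdisj2 : Fm ∩ Gm = ∅) :
    ∃ (Ip : Set A) (Im : Set B), IsPrimeLatIdeal Ip ∧ IsPrimeLatIdeal Im ∧
      Gp ⊆ Ip ∧ Ip ∩ Fp = ∅ ∧ Gm ⊆ Im ∧ Im ∩ Fm = ∅ ∧
      (∀ p ∈ con, p.1 ∈ Ip ∨ p.2 ∈ Im) ∧ (∀ p ∈ tot, p.1 ∉ Ip ∨ p.2 ∉ Im) := by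
  classical
  set S : Set (Set A × Set B) := {p | IsLatIdeal p.1 ∧ IsLatIdeal p.2 ∧
    Gp ⊆ p.1 ∧ Gm ⊆ p.2 ∧ p.1 ∩ Fp = ∅ ∧ p.2 ∩ Fm = ∅ ∧
    (∀ q ∈ con, q.1 ∈ p.1 ∨ q.2 ∈ p.2) ∧ (∀ q ∈ tot, q.1 ∉ p.1 ∨ q.2 ∉ p.2)} with hS
  have hGS : (Gp, Gm) ∈ S := by
    refine ⟨hGp, hGm, le_refl _, le_refl _, ?_, ?_, hcon, ?_⟩
    · rw [Set.inter_comm]; exact hdisj1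
    · rw [Set.inter_comm]; exact hdisj2
    · intro q hq
      by_contra h
      push_neg at h
      rcases htot q hq with h1 | h1
      · exact inter_empty_absurd hdisj1 h1 h.1
      · exact inter_empty_absurd hdisj2 h1 h.2
  obtain ⟨m, -, hm⟩ := zorn_le_nonempty₀ S (fun c hcS hc y hyc => by
    refine ⟨(⋃ p ∈ c, p.1, ⋃ p ∈ c, p.2), ?_, ?_⟩
    · have mem1 : ∀ {a : A}, a ∈ (⋃ p ∈ c, p.1) ↔ ∃ p ∈ c, a ∈ p.1 := by
        intro a; simp
      have mem2 : ∀ {b : B}, b ∈ (⋃ p ∈ c, p.2) ↔ ∃ p ∈ c, b ∈ p.2 := by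
        intro a; simp
      refine ⟨?_, ?_, ?_, ?_, ?_, ?_, ?_, ?_⟩
      · -- first component ideal
        obtain ⟨a, ha⟩ := (hcS hyc).1.1
        refine ⟨⟨a, mem1.2 ⟨y, hyc, ha⟩⟩, ?_, ?_⟩
        · intro u v huv hv
          obtain ⟨p, hpc, hp⟩ := mem1.1 hv
          exact mem1.2 ⟨p, hpc, (hcS hpc).1.2.1 u v huv hp⟩
        · intro u hu v hv
          obtain ⟨p, hpc, hp⟩ := mem1.1 hu
          obtain ⟨q, hqc, hq⟩ := mem1.1 hv
          rcases hc.total hpc hqc with h | h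
          · exact mem1.2 ⟨q, hqc, (hcS hqc).1.2.2 u (h.1 hp) v hq⟩
          · exact mem1.2 ⟨p, hpc, (hcS hpc).1.2.2 u hp v (h.1 hq)⟩
      · -- second component ideal
        obtain ⟨a, ha⟩ := (hcS hyc).2.1.1
        refine ⟨⟨a, mem2.2 ⟨y, hyc, ha⟩⟩, ?_, ?_⟩
        · intro u v huv hv
          obtain ⟨p, hpc, hp⟩ := mem2.1 hv
          exact mem2.2 ⟨p, hpc, (hcS hpc).2.1.2.1 u v huv hp⟩
        · intro u hu v hv
          obtain ⟨p, hpc, hp⟩ := mem2.1 hu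
          obtain ⟨q, hqc, hq⟩ := mem2.1 hv
          rcases hc.total hpc hqc with h | h
          · exact mem2.2 ⟨q, hqc, (hcS hqc).2.1.2.2 u (h.2 hp) v hq⟩
          · exact mem2.2 ⟨p, hpc, (hcS hpc).2.1.2.2 u hp v (h.2 hq)⟩
      · intro a ha; exact mem1.2 ⟨y, hyc, (hcS hyc).2.2.1 ha⟩
      · intro b hb; exact mem2.2 ⟨y, hyc, (hcS hyc).2.2.2.1 hb⟩
      · ext a
        simp only [Set.mem_inter_iff, Set.mem_empty_iff_false, iff_false, not_and]
        intro ha hFa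
        obtain ⟨p, hpc, hp⟩ := mem1.1 ha
        exact inter_empty_absurd (hcS hpc).2.2.2.2.1 hp hFa
      · ext b
        simp only [Set.mem_inter_iff, Set.mem_empty_iff_false, iff_false, not_and]
        intro hb hFb
        obtain ⟨p, hpc, hp⟩ := mem2.1 hb
        exact inter_empty_absurd (hcS hpc).2.2.2.2.2.1 hp hFb
      · intro q hq
        rcases (hcS hyc).2.2.2.2.2.2.1 q hq with h | h
        · exact Or.inl (mem1.2 ⟨y, hyc, h⟩)
        · exact Or.inr (mem2.2 ⟨y, hyc, h⟩)
      · intro q hq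
        by_contra h
        push_neg at h
        obtain ⟨p, hpc, hp⟩ := mem1.1 h.1
        obtain ⟨p', hpc', hp'⟩ := mem2.1 h.2
        rcases hc.total hpc hpc' with hle | hle
        · rcases (hcS hpc').2.2.2.2.2.2.2 q hq with h' | h'
          · exact h' (hle.1 hp)
          · exact h' hp'
        · rcases (hcS hpc).2.2.2.2.2.2.2 q hq with h' | h'
          · exact h' hp
          · exact h' (hle.2 hp')
    · intro z hzc
      constructor
      · intro a ha; exact Set.mem_biUnion hzc ha
      · intro b hb; exact Set.mem_biUnion hzc hb) (Gp, Gm) hGS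
  obtain ⟨⟨hI, hJ, hGpI, hGmJ, hIFp, hJFm, hconm, htotm⟩, hmax⟩ := hm
  set I := m.1
  set J := m.2
  -- key facts from maximality
  have keyA : ∀ x : A, x ∉ I → ∃ f ∈ Fp, ∃ i ∈ I, f ≤ i ⊔ x := by
    intro x hx
    set Ix : Set A := {z | ∃ i ∈ I, z ≤ i ⊔ x} with hIx
    have hIsub : I ⊆ Ix := fun i hi => ⟨i, hi, le_sup_left⟩
    have hxIx : x ∈ Ix := by
      obtain ⟨i, hi⟩ := hI.1
      exact ⟨i, hi, le_sup_right⟩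
    have hIxIdeal : IsLatIdeal Ix := by
      refine ⟨⟨x, hxIx⟩, ?_, ?_⟩
      · rintro u v huv ⟨i, hi, hvi⟩
        exact ⟨i, hi, huv.trans hvi⟩
      · rintro u ⟨i, hi, hui⟩ v ⟨j, hj, hvj⟩
        exact ⟨i ⊔ j, hI.2.2 i hi j hj,
          sup_le (hui.trans (sup_le_sup_right le_sup_left x))
            (hvj.trans (sup_le_sup_right le_sup_right x))⟩
    have hnot : (Ix, J) ∉ S := by
      intro hmem
      have := hmax hmem ⟨hIsub, le_refl J⟩
      exact hx (this.1 hxIx)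
    -- which condition fails?
    by_contra hno
    push_neg at hno
    apply hnot
    refine ⟨hIxIdeal, hJ, fun a ha => hIsub (hGpI ha), hGmJ, ?_, hJFm, ?_, ?_⟩
    · ext a
      simp only [Set.mem_inter_iff, Set.mem_empty_iff_false, iff_false, not_and]
      rintro ⟨i, hi, hai⟩ hFa
      exact (hno a hFa i hi) hai
    · intro q hq
      rcases hconm q hq with h | h
      · exact Or.inl (hIsub h)
      · exact Or.inr h
    · intro q hq
      by_contra h
      push_neg at h
      obtain ⟨⟨i, hi, hqi⟩, hq2⟩ := h
      rcases htot q hq with hf | hf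
      · exact (hno q.1 hf i hi) hqi
      · exact inter_empty_absurd hJFm hq2 hf
  have keyB : ∀ x : B, x ∉ J → ∃ f ∈ Fm, ∃ i ∈ J, f ≤ i ⊔ x := by
    intro x hx
    set Jx : Set B := {z | ∃ i ∈ J, z ≤ i ⊔ x} with hJx
    have hJsub : J ⊆ Jx := fun i hi => ⟨i, hi, le_sup_left⟩
    have hxJx : x ∈ Jx := by
      obtain ⟨i, hi⟩ := hJ.1
      exact ⟨i, hi, le_sup_right⟩
    have hJxIdeal : IsLatIdeal Jx := by
      refine ⟨⟨x, hxJx⟩, ?_, ?_⟩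
      · rintro u v huv ⟨i, hi, hvi⟩
        exact ⟨i, hi, huv.trans hvi⟩
      · rintro u ⟨i, hi, hui⟩ v ⟨j, hj, hvj⟩
        exact ⟨i ⊔ j, hJ.2.2 i hi j hj,
          sup_le (hui.trans (sup_le_sup_right le_sup_left x))
            (hvj.trans (sup_le_sup_right le_sup_right x))⟩
    have hnot : (I, Jx) ∉ S := by
      intro hmem
      have := hmax hmem ⟨le_refl I, hJsub⟩
      exact hx (this.2 hxJx)
    by_contra hno
    push_neg at hno
    apply hnot
    refine ⟨hI, hJxIdeal, hGpI, fun a ha => hJsub (hGmJ ha), hIFp, ?_, ?_, ?_⟩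
    · ext a
      simp only [Set.mem_inter_iff, Set.mem_empty_iff_false, iff_false, not_and]
      rintro ⟨i, hi, hai⟩ hFa
      exact (hno a hFa i hi) hai
    · intro q hq
      rcases hconm q hq with h | h
      · exact Or.inl h
      · exact Or.inr (hJsub h)
    · intro q hq
      by_contra h
      push_neg at h
      obtain ⟨hq1, ⟨i, hi, hqi⟩⟩ := h
      rcases htot q hq with hf | hf
      · exact inter_empty_absurd hIFp hq1 hf
      · exact (hno q.2 hf i hi) hqi
  -- primality
  have primeA : ∀ x y : A, x ⊓ y ∈ I → x ∈ I ∨ y ∈ I := by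
    intro x y hxy
    by_contra h
    push_neg at h
    obtain ⟨f1, hf1, i1, hi1, h1⟩ := keyA x h.1
    obtain ⟨f2, hf2, i2, hi2, h2⟩ := keyA y h.2
    have hii : i1 ⊔ i2 ∈ I := hI.2.2 i1 hi1 i2 hi2
    have key : f1 ⊓ f2 ≤ (i1 ⊔ i2) ⊔ (x ⊓ y) := by
      calc f1 ⊓ f2 ≤ (i1 ⊔ x) ⊓ (i2 ⊔ y) := inf_le_inf h1 h2
        _ ≤ ((i1 ⊔ i2) ⊔ x) ⊓ ((i1 ⊔ i2) ⊔ y) := by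
            gcongr <;> simp
        _ = (i1 ⊔ i2) ⊔ (x ⊓ y) := (sup_inf_left _ _ _).symm
    have hmem : f1 ⊓ f2 ∈ I :=
      hI.2.1 _ _ key (hI.2.2 _ hii _ hxy)
    have hFmem : f1 ⊓ f2 ∈ Fp := hFp.2.2 f1 hf1 f2 hf2
    exact inter_empty_absurd hIFp hmem hFmem
  have primeB : ∀ x y : B, x ⊓ y ∈ J → x ∈ J ∨ y ∈ J := by
    intro x y hxy
    by_contra h
    push_neg at h
    obtain ⟨f1, hf1, i1, hi1, h1⟩ := keyB x h.1
    obtain ⟨f2, hf2, i2, hi2, h2⟩ := keyB y h.2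
    have hii : i1 ⊔ i2 ∈ J := hJ.2.2 i1 hi1 i2 hi2
    have key : f1 ⊓ f2 ≤ (i1 ⊔ i2) ⊔ (x ⊓ y) := by
      calc f1 ⊓ f2 ≤ (i1 ⊔ x) ⊓ (i2 ⊔ y) := inf_le_inf h1 h2
        _ ≤ ((i1 ⊔ i2) ⊔ x) ⊓ ((i1 ⊔ i2) ⊔ y) := by
            gcongr <;> simp
        _ = (i1 ⊔ i2) ⊔ (x ⊓ y) := (sup_inf_left _ _ _).symm
    have hmem : f1 ⊓ f2 ∈ J :=
      hJ.2.1 _ _ key (hJ.2.2 _ hii _ hxy)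
    have hFmem : f1 ⊓ f2 ∈ Fm := hFm.2.2 f1 hf1 f2 hf2
    exact inter_empty_absurd hJFm hmem hFmem
  have hInU : I ≠ Set.univ := by
    intro h
    obtain ⟨f, hf⟩ := hFp.1
    exact inter_empty_absurd hIFp (h ▸ Set.mem_univ f) hf
  have hJnU : J ≠ Set.univ := by
    intro h
    obtain ⟨f, hf⟩ := hFm.1
    exact inter_empty_absurd hJFm (h ▸ Set.mem_univ f) hf
  exact ⟨I, J, ⟨hI, hInU, primeA⟩, ⟨hJ, hJnU, primeB⟩, hGpI, hIFp, hGmJ, hJFm,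
    hconm, htotm⟩
end

section
/- Let A and B be bounded distributive lattices, d : A → B an order-reversing bijection whose inverse d⁻¹ is also order-reversing, I⁺ an ideal of A and I⁻ an ideal of B. Then there exist a ∈ I⁺ and b ∈ I⁻ with d(a) ≤ b if and only if for every prime ideal P of A, either some a ∈ I⁺ satisfies a ∉ P, or some b ∈ I⁻ satisfies d⁻¹(b) ∈ P. -/
/-- `(Ip, Im)` is total (i.e. `d a ≤ b` for some `a ∈ Ip`, `b ∈ Im`) iff every
prime ideal `P` of `A` satisfies the corresponding covering condition. -/
theorem tot_ideal_iff_every_prime_covered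
    {A B : Type*} [DistribLattice A] [BoundedOrder A]
    [DistribLattice B] [BoundedOrder B]
    (d : A → B) (dinv : B → A)
    (hleft : ∀ a : A, dinv (d a) = a) (hright : ∀ b : B, d (dinv b) = b)
    (hd : ∀ a a' : A, a ≤ a' → d a' ≤ d a)
    (hdinv : ∀ b b' : B, b ≤ b' → dinv b' ≤ dinv b)
    (Ip : Set A) (Im : Set B)
    (hIp : IsLatIdeal Ip) (hIm : IsLatIdeal Im) :
    (∃ a ∈ Ip, ∃ b ∈ Im, d a ≤ b) ↔
      ∀ P : Set A, IsPrimeLatIdeal P →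
        (∃ a ∈ Ip, a ∉ P) ∨ (∃ b ∈ Im, dinv b ∈ P) := by
  constructor
  · rintro ⟨a, ha, b, hb, hab⟩ P hP
    by_cases haP : a ∈ P
    · refine Or.inr ⟨b, hb, ?_⟩
      have : dinv b ≤ a := by
        have := hdinv _ _ hab
        rwa [hleft] at this
      exact hP.1.2.1 _ _ this haP
    · exact Or.inl ⟨a, ha, haP⟩
  · intro h
    by_contra hne
    push_neg at hne
    -- build the ideal generated by Ip and the filter generated by dinv '' Im
    obtain ⟨⟨a0, ha0⟩, hdown, hsup⟩ := hIp
    obtain ⟨⟨b0, hb0⟩, hdownB, hsupB⟩ := hIm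
    have hI : Order.IsIdeal Ip :=
      ⟨fun x y hxy hy => hdown y x hxy hy, ⟨a0, ha0⟩,
        fun x hx y hy => ⟨x ⊔ y, hsup x hx y hy, le_sup_left, le_sup_right⟩⟩
    set F : Set A := {x | ∃ b ∈ Im, dinv b ≤ x} with hFdef
    have hF : Order.IsPFilter F := by
      refine Order.IsPFilter.of_def ⟨dinv b0, b0, hb0, le_rfl⟩ ?_ ?_
      · rintro x ⟨b, hb, hbx⟩ y ⟨b', hb', hby⟩
        exact ⟨dinv (b ⊔ b'), ⟨b ⊔ b', hsupB b hb b' hb', le_rfl⟩,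
          le_trans (hdinv _ _ le_sup_left) hbx,
          le_trans (hdinv _ _ le_sup_right) hby⟩
      · rintro x y hxy ⟨b, hb, hbx⟩
        exact ⟨b, hb, hbx.trans hxy⟩
    have hdisj : Disjoint (↑hF.toPFilter : Set A) (↑hI.toIdeal : Set A) := by
      rw [Set.disjoint_left]
      rintro x ⟨b, hb, hbx⟩ hxI
      have : d x ≤ b := by
        have := hd _ _ hbx
        rwa [hright] at this
      exact hne x hxI b hb this
    obtain ⟨J, hJprime, hIJ, hJdisj⟩ :=
      DistribLattice.prime_ideal_of_disjoint_filter_ideal hdisj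
    have hJ : IsPrimeLatIdeal (↑J : Set A) := by
      refine ⟨⟨J.nonempty, fun x y hxy hy => J.lower hxy hy,
        fun x hx y hy => Order.Ideal.sup_mem hx hy⟩, ?_, fun x y => hJprime.mem_or_mem⟩
      intro hu
      have : Order.Ideal.IsProper J := hJprime.toIsProper
      exact (Order.Ideal.isProper_iff J).mp this hu
    rcases h (↑J) hJ with ⟨a, ha, haJ⟩ | ⟨b, hb, hbJ⟩
    · exact haJ (hIJ ha)
    · exact Set.disjoint_left.mp hJdisj ⟨b, hb, le_rfl⟩ hbJ
end

section
/- Let X be a set equipped with two topologies τ⁺ and τ⁻ such that the bitopological space (X, τ⁺, τ⁻) is extremally disconnected. Then for every family (Uᵢ)ᵢ of subsets of X each of which is τ⁺-open and τ⁻-closed, the τ⁻-closure of ⋃ᵢ Uᵢ is itself τ⁺-open and τ⁻-closed, and it is the least τ⁺-open and τ⁻-closed set containing every Uᵢ. In particular, the set of τ⁺-open and τ⁻-closed subsets of X, ordered by inclusion, is a complete lattice. -/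
open Set Topology

/-- A bitopological space is extremally disconnected if the `τm`-closure of
every `τp`-open set is `τp`-open, and the `τp`-closure of every `τm`-open set
is `τm`-open. -/
def BiExtrDisc {X : Type*} (τp τm : TopologicalSpace X) : Prop :=
  (∀ U : Set X, IsOpen[τp] U → IsOpen[τp] (@closure X τm U)) ∧
  (∀ U : Set X, IsOpen[τm] U → IsOpen[τm] (@closure X τp U))

lemma biExtrDisc_aux {X : Type*} (τp τm : TopologicalSpace X) (hED : BiExtrDisc τp τm)
    {ι : Type*} (U : ι → Set X)
    (hU : ∀ i, IsOpen[τp] (U i) ∧ IsClosed[τm] (U i)) :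
    IsOpen[τp] (@closure X τm (⋃ i, U i)) ∧
     IsClosed[τm] (@closure X τm (⋃ i, U i)) ∧
     (∀ i, U i ⊆ @closure X τm (⋃ i, U i)) ∧
     (∀ W : Set X, IsOpen[τp] W → IsClosed[τm] W → (∀ i, U i ⊆ W) →
        @closure X τm (⋃ i, U i) ⊆ W) := by
  have h1 : IsOpen[τp] (⋃ i, U i) := by
    letI := τp; exact isOpen_iUnion fun i => (hU i).1
  have h2 : IsClosed[τm] (@closure X τm (⋃ i, U i)) := by
    letI := τm; exact isClosed_closure
  have h3 : (⋃ i, U i) ⊆ @closure X τm (⋃ i, U i) := by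
    letI := τm; exact subset_closure
  refine ⟨hED.1 _ h1, h2, fun i => (subset_iUnion U i).trans h3, fun W hWo hWc hW => ?_⟩
  letI := τm; exact closure_minimal (iUnion_subset hW) hWc

/-- In an extremally disconnected bitopological space, for any family of
`τp`-open `τm`-closed sets, the `τm`-closure of their union is the least
`τp`-open `τm`-closed set containing all of them; in particular, the poset of
`τp`-open `τm`-closed sets has all suprema. -/
theorem extrDisc_closure_union_least
    {X : Type*} (τp τm : TopologicalSpace X) (hED : BiExtrDisc τp τm)
    {ι : Type*} (U : ι → Set X)
    (hU : ∀ i, IsOpen[τp] (U i) ∧ IsClosed[τm] (U i)) :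
    (IsOpen[τp] (@closure X τm (⋃ i, U i)) ∧
     IsClosed[τm] (@closure X τm (⋃ i, U i)) ∧
     (∀ i, U i ⊆ @closure X τm (⋃ i, U i)) ∧
     (∀ W : Set X, IsOpen[τp] W → IsClosed[τm] W → (∀ i, U i ⊆ W) →
        @closure X τm (⋃ i, U i) ⊆ W)) ∧
    (∀ 𝒮 : Set {V : Set X // IsOpen[τp] V ∧ IsClosed[τm] V}, ∃ m, IsLUB 𝒮 m) := by
  refine ⟨biExtrDisc_aux τp τm hED U hU, fun 𝒮 => ?_⟩
  obtain ⟨ho, hc, hsub, hleast⟩ :=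
    biExtrDisc_aux τp τm hED (fun s : 𝒮 => (s : Set X)) (fun s => s.1.2)
  refine ⟨⟨_, ho, hc⟩, fun s hs => hsub ⟨s, hs⟩, fun w hw => ?_⟩
  exact hleast w w.2.1 w.2.2 fun s => hw s.2
end

section
/- Let X be a set equipped with two topologies τ⁺ and τ⁻ such that the bitopological space (X, τ⁺, τ⁻) is zero-dimensional. Then (X, τ⁺, τ⁻) is extremally disconnected if and only if the set of all τ⁺-open and τ⁻-closed subsets of X, ordered by inclusion, is a complete lattice (i.e., every family of τ⁺-open τ⁻-closed sets has a least upper bound among the τ⁺-open τ⁻-closed sets). -/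
open Set Topology

private theorem bi_isClosed_closure {X : Type*} (τ : TopologicalSpace X) (s : Set X) :
    IsClosed[τ] (@closure X τ s) := by letI := τ; exact isClosed_closure

private theorem bi_subset_closure {X : Type*} (τ : TopologicalSpace X) (s : Set X) :
    s ⊆ @closure X τ s := by letI := τ; exact subset_closure

private theorem bi_closure_minimal {X : Type*} (τ : TopologicalSpace X) {s t : Set X}
    (h₁ : s ⊆ t) (h₂ : IsClosed[τ] t) : @closure X τ s ⊆ t := by
  letI := τ; exact closure_minimal h₁ h₂

private theorem bi_isOpen_sUnion {X : Type*} (τ : TopologicalSpace X) {S : Set (Set X)}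
    (h : ∀ t ∈ S, IsOpen[τ] t) : IsOpen[τ] (⋃₀ S) := by
  letI := τ; exact isOpen_sUnion h


private theorem bi_inter_open {X : Type*} (τ : TopologicalSpace X) {s t : Set X}
    (hs : IsOpen[τ] s) (ht : IsOpen[τ] t) : IsOpen[τ] (s ∩ t) := by
  letI := τ; exact hs.inter ht

private theorem bi_inter_closed {X : Type*} (τ : TopologicalSpace X) {s t : Set X}
    (hs : IsClosed[τ] s) (ht : IsClosed[τ] t) : IsClosed[τ] (s ∩ t) := by
  letI := τ; exact hs.inter ht

private theorem bi_isOpen_compl {X : Type*} (τ : TopologicalSpace X) {s : Set X}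
    (hs : IsClosed[τ] s) : IsOpen[τ] sᶜ := by letI := τ; exact hs.isOpen_compl

private theorem bi_isClosed_compl {X : Type*} (τ : TopologicalSpace X) {s : Set X}
    (hs : IsOpen[τ] s) : IsClosed[τ] sᶜ := by letI := τ; exact hs.isClosed_compl

/-- A zero-dimensional bitopological space is extremally disconnected iff every
family of `τp`-open `τm`-closed sets has a least upper bound among the
`τp`-open `τm`-closed sets (i.e. the lattice of d-clopen sets is complete). -/
theorem zeroDim_extrDisc_iff_complete
    {X : Type*} (τp τm : TopologicalSpace X) (hzd : BiZeroDim τp τm) :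
    BiExtrDisc τp τm ↔
      ∀ 𝒮 : Set (Set X), (∀ U ∈ 𝒮, IsOpen[τp] U ∧ IsClosed[τm] U) →
        ∃ V : Set X, (IsOpen[τp] V ∧ IsClosed[τm] V) ∧ (∀ U ∈ 𝒮, U ⊆ V) ∧
          ∀ W : Set X, (IsOpen[τp] W ∧ IsClosed[τm] W) → (∀ U ∈ 𝒮, U ⊆ W) → V ⊆ W := by
  constructor
  · rintro ⟨h1, _⟩ 𝒮 h𝒮
    refine ⟨@closure X τm (⋃₀ 𝒮),
      ⟨h1 _ (bi_isOpen_sUnion τp fun U hU => (h𝒮 U hU).1), bi_isClosed_closure τm _⟩,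
      fun U hU => (subset_sUnion_of_mem hU).trans (bi_subset_closure τm _), ?_⟩
    rintro W ⟨_, hWc⟩ hW
    exact bi_closure_minimal τm (sUnion_subset hW) hWc
  · intro hcomp
    constructor
    · intro U hU
      obtain ⟨𝒮, h𝒮, hUeq⟩ := hzd.1 U hU
      obtain ⟨V, ⟨hVo, hVc⟩, hub, hlub⟩ := hcomp 𝒮 h𝒮
      have hUV : U ⊆ V := hUeq ▸ sUnion_subset hub
      have hcl1 : @closure X τm U ⊆ V := bi_closure_minimal τm hUV hVc
      have hcl2 : V ⊆ @closure X τm U := by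
        by_contra hnot
        obtain ⟨x, hxV, hxC⟩ := not_subset.mp hnot
        obtain ⟨𝒯, h𝒯, hTeq⟩ := hzd.2 _ (bi_isOpen_compl τm (bi_isClosed_closure τm U))
        obtain ⟨T, hT𝒯, hxT⟩ : ∃ T ∈ 𝒯, x ∈ T := by
          have : x ∈ ⋃₀ 𝒯 := hTeq ▸ hxC
          exact this
        have hTsub : T ⊆ (@closure X τm U)ᶜ := hTeq ▸ subset_sUnion_of_mem hT𝒯
        have hclT : @closure X τm U ⊆ Tᶜ := subset_compl_comm.mp hTsub
        have hW : V ⊆ V ∩ Tᶜ := by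
          refine hlub _ ⟨bi_inter_open τp hVo (bi_isOpen_compl τp (h𝒯 T hT𝒯).2),
            bi_inter_closed τm hVc (bi_isClosed_compl τm (h𝒯 T hT𝒯).1)⟩ fun U' hU' => subset_inter (hub U' hU')
            (((subset_sUnion_of_mem hU').trans (hUeq ▸ (bi_subset_closure τm U))).trans hclT)
        exact (hW hxV).2 hxT
      rw [show @closure X τm U = V from subset_antisymm hcl1 hcl2]
      exact hVo
    · intro U hU
      set L := {W : Set X | (IsOpen[τp] W ∧ IsClosed[τm] W) ∧ W ⊆ Uᶜ} with hL
      obtain ⟨V, ⟨hVo, hVc⟩, hub, hlub⟩ := hcomp L fun W hW => hW.1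
      have hVU : V ⊆ Uᶜ := by
        by_contra hnot
        obtain ⟨x, hxV, hxU⟩ := not_subset.mp hnot
        rw [notMem_compl_iff] at hxU
        obtain ⟨𝒯, h𝒯, hTeq⟩ := hzd.2 U hU
        obtain ⟨T, hT𝒯, hxT⟩ : ∃ T ∈ 𝒯, x ∈ T := by
          have : x ∈ ⋃₀ 𝒯 := hTeq ▸ hxU
          exact this
        have hW : V ⊆ V ∩ Tᶜ := by
          refine hlub _ ⟨bi_inter_open τp hVo (bi_isOpen_compl τp (h𝒯 T hT𝒯).2),
            bi_inter_closed τm hVc (bi_isClosed_compl τm (h𝒯 T hT𝒯).1)⟩ fun W hWL => subset_inter (hub W hWL)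
            (hWL.2.trans (compl_subset_compl.mpr (hTeq ▸ subset_sUnion_of_mem hT𝒯)))
        exact (hW hxV).2 hxT
      have h1 : @closure X τp U ⊆ Vᶜ :=
        bi_closure_minimal τp (subset_compl_comm.mp hVU) (bi_isClosed_compl τp hVo)
      have h2 : Vᶜ ⊆ @closure X τp U := by
        rw [← compl_compl (@closure X τp U)]
        refine compl_subset_compl.mpr ?_
        obtain ⟨𝒲, h𝒲, hWeq⟩ := hzd.1 _ (bi_isOpen_compl τp (bi_isClosed_closure τp U))
        rw [← hWeq]
        refine sUnion_subset fun W hW𝒲 => hub W ⟨h𝒲 W hW𝒲, ?_⟩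
        exact ((subset_sUnion_of_mem hW𝒲).trans (hWeq ▸ le_rfl)).trans
          (compl_subset_compl.mpr (bi_subset_closure τp U))
      rw [show @closure X τp U = Vᶜ from subset_antisymm h1 h2]
      exact bi_isOpen_compl τm hVc
end

section
/- Consider the unit interval [0,1] as a bounded distributive lattice with d(a) = 1 − a (an order-reversing involution), and let F = {x ∈ [0,1] : 0 < x}. Then: (i) F is a proper filter of [0,1], and for all a, b ∈ [0,1] with 1 − a ≤ b, a ∈ F or b ∈ F; (ii) the pair (F, F) is maximal among pairs of proper filters of [0,1]: any proper filters G⁺ ⊇ F and G⁻ ⊇ F of [0,1] satisfy G⁺ = G⁻ = F; (iii) nevertheless there exists a ∈ F with 1 − a ∈ F (for instance a = 1/2), so it is not the case that for every a ∈ [0,1], a ∈ F iff 1 − a ∉ F; hence this maximal pair of filters does not arise as the pair of complements of a prime d-ideal pair. -/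
/-!
In a lattice with `⊥` a filter containing `⊥` is everything, so every proper filter lies in
`{x | ⊥ < x}`; in a linear order this set is itself a filter, hence the unique maximal proper
filter. In `[0,1]` it contains both `a` and `1 - a` for any `0 < a < 1`, which a prime
complement pair forbids.
-/

open Set unitInterval

section LatFilter

variable {L : Type*}

theorem IsLatFilter.eq_univ_of_bot_mem [Lattice L] [OrderBot L] {F : Set L}
    (hF : IsLatFilter F) (hbot : ⊥ ∈ F) : F = univ :=
  eq_univ_of_forall fun y => hF.2.1 ⊥ y bot_le hbot

theorem IsLatFilter.subset_Ioi_bot [Lattice L] [OrderBot L] {F : Set L}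
    (hF : IsLatFilter F) (hproper : F ≠ univ) : F ⊆ Ioi ⊥ :=
  fun _ hx => bot_lt_iff_ne_bot.2 fun hbot => hproper (hF.eq_univ_of_bot_mem (hbot ▸ hx))

theorem IsLatFilter.eq_Ioi_bot_of_subset [Lattice L] [OrderBot L] {F : Set L}
    (hF : IsLatFilter F) (hproper : F ≠ univ) (hsub : Ioi ⊥ ⊆ F) : F = Ioi ⊥ :=
  (hF.subset_Ioi_bot hproper).antisymm hsub

theorem isLatFilter_Ioi [LinearOrder L] {a : L} (hne : (Ioi a).Nonempty) :
    IsLatFilter (Ioi a) :=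
  ⟨hne, fun _ _ hxy hx => lt_of_lt_of_le hx hxy, fun _ hx _ hy => lt_min hx hy⟩

theorem Ioi_bot_ne_univ [Preorder L] [OrderBot L] : Ioi (⊥ : L) ≠ univ :=
  (ne_univ_iff_exists_notMem _).2 ⟨⊥, lt_irrefl _⟩

end LatFilter

namespace unitInterval

theorem symm_pos_iff {a : I} : 0 < σ a ↔ a < 1 := by
  rw [unitInterval.pos_iff_ne_zero, Ne, symm_eq_zero, unitInterval.lt_one_iff_ne_one]

theorem pos_or_pos_of_symm_le {a b : I} (h : σ a ≤ b) : 0 < a ∨ 0 < b := by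
  rcases eq_or_ne a 0 with rfl | ha
  · exact Or.inr (zero_lt_one.trans_le (symm_zero ▸ h))
  · exact Or.inl (unitInterval.pos_iff_ne_zero.2 ha)

theorem exists_pos_symm_pos : ∃ a : I, 0 < a ∧ 0 < σ a := by
  obtain ⟨a, ha₀, ha₁⟩ := exists_between (zero_lt_one' I)
  exact ⟨a, ha₀, symm_pos_iff.2 ha₁⟩

end unitInterval

/-- In the unit interval with `d a = 1 - a`, the set `F = {x | 0 < x}` is a
proper filter such that: `1 - a ≤ b` implies `a ∈ F` or `b ∈ F`; the pair
`(F, F)` is maximal among pairs of proper filters; yet there is `a ∈ F` with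
`1 - a ∈ F`, so `(F, F)` is not the complement pair of a prime d-ideal pair. -/
theorem maximal_d_filter_not_prime :
    (IsLatFilter {x : unitInterval | 0 < x} ∧
     {x : unitInterval | 0 < x} ≠ Set.univ ∧
     (∀ a b : unitInterval, unitInterval.symm a ≤ b →
       a ∈ {x : unitInterval | 0 < x} ∨ b ∈ {x : unitInterval | 0 < x})) ∧
    (∀ Gp Gm : Set unitInterval,
      IsLatFilter Gp → Gp ≠ Set.univ → IsLatFilter Gm → Gm ≠ Set.univ →
      {x : unitInterval | 0 < x} ⊆ Gp → {x : unitInterval | 0 < x} ⊆ Gm →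
      Gp = {x : unitInterval | 0 < x} ∧ Gm = {x : unitInterval | 0 < x}) ∧
    ((∃ a ∈ {x : unitInterval | 0 < x},
        unitInterval.symm a ∈ {x : unitInterval | 0 < x}) ∧
     ¬ ∀ a : unitInterval, a ∈ {x : unitInterval | 0 < x} ↔
        unitInterval.symm a ∉ {x : unitInterval | 0 < x}) := by
  -- in `I`, the set `{x | 0 < x}` is `Ioi ⊥` definitionally
  obtain ⟨a, ha, hsa⟩ := exists_pos_symm_pos
  refine ⟨⟨?_, Ioi_bot_ne_univ, fun _ _ => pos_or_pos_of_symm_le⟩, ?_, ⟨a, ha, hsa⟩, ?_⟩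
  · exact isLatFilter_Ioi ⟨1, zero_lt_one' I⟩
  · exact fun Gp Gm hGp hGp' hGm hGm' hsubp hsubm =>
      ⟨hGp.eq_Ioi_bot_of_subset hGp' hsubp, hGm.eq_Ioi_bot_of_subset hGm' hsubm⟩
  · exact fun hprime => (hprime a).1 ha hsa
end
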